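/- Let $n \ge 1$ and let $u_0 \in L^1(\mathbb{R}^n)$ with $\int_{\mathbb{R}^n} u_0\,dx = M$. Define $u(\cdot,t) = G_t * u_0$ for $t>0$, where $G_t(x) = (4\pi t)^{-n/2} e^{-|x|^2/(4t)}$ is the Gaussian heat kernel. Then $t^{n/2}\,\|u(\cdot,t) - M G_t\|_{L^\infty(\mathbb{R}^n)} \to 0$ as $t \to \infty$. -/

import Mathlib

/-!
With `g s = exp (-s² / 4)`, the kernel is `G_t z = (4πt)^(-n/2) g (‖z‖ / √t)`, and `g` is
bounded by `1` and `1`-Lipschitz. Since `M = ∫ u0`, we have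
`u(x,t) - M G_t x = ∫ (G_t (x - y) - G_t x) u0 y dy`, hence uniformly in `x`
`t^(n/2) |u(x,t) - M G_t x| ≤ (4π)^(-n/2) ∫ min 1 (‖y‖ / √t) |u0 y| dy`,
and the right-hand side tends to `0` by dominated convergence.
-/

open Real MeasureTheory Filter

/-- The Gaussian heat kernel on `ℝⁿ`: `G t x = (4πt)^(-n/2) exp(-‖x‖²/(4t))`. -/
noncomputable def heatKernel (n : ℕ) (t : ℝ) (x : EuclideanSpace ℝ (Fin n)) : ℝ :=
  (4 * π * t) ^ (-(n : ℝ) / 2) * Real.exp (-‖x‖ ^ 2 / (4 * t))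

/-- The solution of the heat equation with initial data `u0`, `u(·,t) = G_t * u0`. -/
noncomputable def heatSol (n : ℕ) (u0 : EuclideanSpace ℝ (Fin n) → ℝ) (t : ℝ)
    (x : EuclideanSpace ℝ (Fin n)) : ℝ :=
  ∫ y, heatKernel n t (x - y) * u0 y

lemma abs_div_two_mul_exp_neg_sq_div_four_le_one (s : ℝ) : |s / 2| * exp (-s ^ 2 / 4) ≤ 1 := by
  have h : |s / 2| ≤ exp (s ^ 2 / 4) := calc
    |s / 2| ≤ (s / 2) ^ 2 + 1 := by nlinarith [sq_abs (s / 2), abs_nonneg (s / 2)]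
    _ = s ^ 2 / 4 + 1 := by ring
    _ ≤ exp (s ^ 2 / 4) := add_one_le_exp _
  rw [neg_div, exp_neg, ← div_eq_mul_inv]
  exact div_le_one_of_le₀ h (exp_pos _).le

lemma lipschitzWith_exp_neg_sq_div_four : LipschitzWith 1 (fun s : ℝ => exp (-s ^ 2 / 4)) := by
  have hderiv : ∀ s : ℝ,
      HasDerivAt (fun s : ℝ => exp (-s ^ 2 / 4)) (exp (-s ^ 2 / 4) * -(s / 2)) s :=
    fun s => ((hasDerivAt_pow 2 s).fun_neg.div_const 4).exp.congr_deriv (by norm_num; ring)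
  refine lipschitzWith_of_nnnorm_deriv_le (fun s => (hderiv s).differentiableAt) fun s => ?_
  rw [(hderiv s).deriv, ← NNReal.coe_le_coe, coe_nnnorm, Real.norm_eq_abs, abs_mul, abs_neg,
    abs_of_pos (exp_pos _), mul_comm]
  exact abs_div_two_mul_exp_neg_sq_div_four_le_one s

lemma exp_neg_sq_div_four_le_one (s : ℝ) : exp (-s ^ 2 / 4) ≤ 1 :=
  exp_le_one_iff.mpr (by nlinarith [sq_nonneg s])

lemma abs_exp_neg_sq_div_four_sub_le (a b : ℝ) :
    |exp (-a ^ 2 / 4) - exp (-b ^ 2 / 4)| ≤ min 1 |a - b| := by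
  refine le_min ?_ ?_
  · exact abs_sub_le_of_nonneg_of_le (exp_pos _).le (exp_neg_sq_div_four_le_one a)
      (exp_pos _).le (exp_neg_sq_div_four_le_one b)
  · simpa [Real.dist_eq] using lipschitzWith_exp_neg_sq_div_four.dist_le_mul a b

lemma norm_min_one_div_le_one {a r : ℝ} (ha : 0 ≤ a) (hr : 0 ≤ r) : ‖min 1 (a / r)‖ ≤ 1 := by
  rw [Real.norm_of_nonneg (le_min zero_le_one (by positivity))]
  exact min_le_left _ _

lemma tendsto_integral_min_one_norm_div_mul_norm {E F : Type*} [NormedAddCommGroup E]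
    [MeasurableSpace E] [OpensMeasurableSpace E] [NormedAddCommGroup F] {μ : Measure E}
    {f : E → F} (hf : Integrable f μ) :
    Tendsto (fun r : ℝ => ∫ y, min 1 (‖y‖ / r) * ‖f y‖ ∂μ) atTop (nhds 0) := by
  have hbound : ∀ r > (0 : ℝ), ∀ y : E, ‖min 1 (‖y‖ / r) * ‖f y‖‖ ≤ ‖f y‖ := fun r hr y => by
    rw [norm_mul, norm_norm]
    exact mul_le_of_le_one_left (norm_nonneg _) (norm_min_one_div_le_one (norm_nonneg y) hr.le)
  have hlim : ∀ y : E, Tendsto (fun r : ℝ => min 1 (‖y‖ / r) * ‖f y‖) atTop (nhds 0) := by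
    intro y
    simpa using ((tendsto_const_nhds (x := (1 : ℝ))).min
      (tendsto_const_nhds.div_atTop tendsto_id)).mul_const ‖f y‖
  simpa using tendsto_integral_filter_of_dominated_convergence (fun y => ‖f y‖)
    (Eventually.of_forall fun r => (measurable_const.min (measurable_norm.div_const r))
      |>.aestronglyMeasurable.mul hf.norm.aestronglyMeasurable)
    ((eventually_gt_atTop 0).mono fun r hr => ae_of_all _ (hbound r hr)) hf.norm
    (ae_of_all _ hlim)

section HeatKernel

variable {n : ℕ} {t : ℝ}

lemma heatKernel_eq_of_pos (ht : 0 < t) (z : EuclideanSpace ℝ (Fin n)) :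
    heatKernel n t z = (4 * π * t) ^ (-(n : ℝ) / 2) * exp (-(‖z‖ / √t) ^ 2 / 4) := by
  rw [heatKernel, div_pow, sq_sqrt ht.le]
  congr 2
  ring

lemma continuous_heatKernel (n : ℕ) (t : ℝ) : Continuous (heatKernel n t) := by
  unfold heatKernel
  fun_prop

lemma norm_heatKernel_le (ht : 0 < t) (z : EuclideanSpace ℝ (Fin n)) :
    ‖heatKernel n t z‖ ≤ (4 * π * t) ^ (-(n : ℝ) / 2) := by
  rw [heatKernel_eq_of_pos ht, norm_mul, Real.norm_of_nonneg (by positivity),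
    Real.norm_of_nonneg (exp_pos _).le]
  exact mul_le_of_le_one_right (by positivity) (exp_neg_sq_div_four_le_one _)

lemma abs_heatKernel_sub_sub_le (ht : 0 < t) (x y : EuclideanSpace ℝ (Fin n)) :
    |heatKernel n t (x - y) - heatKernel n t x| ≤
      (4 * π * t) ^ (-(n : ℝ) / 2) * min 1 (‖y‖ / √t) := by
  rw [heatKernel_eq_of_pos ht, heatKernel_eq_of_pos ht, ← mul_sub, abs_mul,
    abs_of_pos (by positivity)]
  gcongr
  refine (abs_exp_neg_sq_div_four_sub_le _ _).trans (min_le_min_left 1 ?_)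
  rw [← sub_div, abs_div, abs_of_pos (sqrt_pos.2 ht)]
  gcongr
  simpa using abs_norm_sub_norm_le (x - y) x

lemma abs_heatSol_sub_integral_mul_heatKernel_le {u0 : EuclideanSpace ℝ (Fin n) → ℝ}
    (hu0 : Integrable u0) (ht : 0 < t) (x : EuclideanSpace ℝ (Fin n)) :
    |heatSol n u0 t x - (∫ y, u0 y) * heatKernel n t x| ≤
      (4 * π * t) ^ (-(n : ℝ) / 2) * ∫ y, min 1 (‖y‖ / √t) * ‖u0 y‖ := by
  have hconv : Integrable (fun y => heatKernel n t (x - y) * u0 y) :=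
    hu0.bdd_mul ((continuous_heatKernel n t).comp (continuous_sub_left x)).aestronglyMeasurable
      (ae_of_all _ fun y => norm_heatKernel_le ht _)
  have hweight : Integrable (fun y => min 1 (‖y‖ / √t) * ‖u0 y‖) :=
    hu0.norm.bdd_mul (measurable_const.min (measurable_norm.div_const _)).aestronglyMeasurable
      (ae_of_all _ fun y => norm_min_one_div_le_one (norm_nonneg y) (sqrt_nonneg t))
  have hsplit : heatSol n u0 t x - (∫ y, u0 y) * heatKernel n t x =
      ∫ y, (heatKernel n t (x - y) - heatKernel n t x) * u0 y := by
    rw [heatSol, mul_comm, ← integral_const_mul, ← integral_sub hconv (hu0.const_mul _)]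
    simp_rw [sub_mul]
  rw [hsplit, ← integral_const_mul, ← Real.norm_eq_abs]
  refine norm_integral_le_of_norm_le (hweight.const_mul _) (ae_of_all _ fun y => ?_)
  rw [norm_mul, Real.norm_eq_abs, ← mul_assoc]
  exact mul_le_mul_of_nonneg_right (abs_heatKernel_sub_sub_le ht x y) (norm_nonneg _)

lemma rpow_mul_eLpNorm_heatSol_sub_le {u0 : EuclideanSpace ℝ (Fin n) → ℝ}
    (hu0 : Integrable u0) (ht : 0 < t) :
    ENNReal.ofReal (t ^ ((n : ℝ) / 2)) *
        eLpNorm (fun x => heatSol n u0 t x - (∫ y, u0 y) * heatKernel n t x) ⊤ volume ≤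
      ENNReal.ofReal ((4 * π) ^ (-(n : ℝ) / 2) * ∫ y, min 1 (‖y‖ / √t) * ‖u0 y‖) := by
  have hsup : eLpNorm (fun x => heatSol n u0 t x - (∫ y, u0 y) * heatKernel n t x) ⊤ volume ≤
      ENNReal.ofReal ((4 * π * t) ^ (-(n : ℝ) / 2) * ∫ y, min 1 (‖y‖ / √t) * ‖u0 y‖) := by
    rw [eLpNorm_exponent_top]
    exact eLpNormEssSup_le_of_ae_bound
      (ae_of_all _ (abs_heatSol_sub_integral_mul_heatKernel_le hu0 ht))
  have hscale :
      t ^ ((n : ℝ) / 2) * (4 * π * t) ^ (-(n : ℝ) / 2) = (4 * π) ^ (-(n : ℝ) / 2) := by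
    rw [mul_rpow (by positivity) ht.le, mul_left_comm, ← rpow_add ht, neg_div,
      add_neg_cancel, rpow_zero, mul_one]
  calc _ ≤ ENNReal.ofReal (t ^ ((n : ℝ) / 2)) *
        ENNReal.ofReal ((4 * π * t) ^ (-(n : ℝ) / 2) * ∫ y, min 1 (‖y‖ / √t) * ‖u0 y‖) := by
        gcongr
    _ = _ := by rw [← ENNReal.ofReal_mul (by positivity), ← mul_assoc, hscale]

end HeatKernel

theorem heat_sup_convergence_to_gaussian_general (n : ℕ)
    (u0 : EuclideanSpace ℝ (Fin n) → ℝ) (hu0 : Integrable u0) (M : ℝ)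
    (hM : ∫ x, u0 x = M) :
    Tendsto (fun t : ℝ =>
        ENNReal.ofReal (t ^ ((n : ℝ) / 2)) *
          eLpNorm (fun x : EuclideanSpace ℝ (Fin n) =>
            heatSol n u0 t x - M * heatKernel n t x) ⊤ volume)
      atTop (nhds 0) := by
  have hweight : Tendsto (fun t => ∫ y, min 1 (‖y‖ / √t) * ‖u0 y‖) atTop (nhds 0) :=
    (tendsto_integral_min_one_norm_div_mul_norm hu0).comp tendsto_sqrt_atTop
  have hupper := ENNReal.tendsto_ofReal (hweight.const_mul ((4 * π) ^ (-(n : ℝ) / 2)))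
  rw [mul_zero, ENNReal.ofReal_zero] at hupper
  refine tendsto_of_tendsto_of_tendsto_of_le_of_le' tendsto_const_nhds hupper
    (Eventually.of_forall fun t => zero_le) ?_
  filter_upwards [eventually_gt_atTop 0] with t ht
  exact hM ▸ rpow_mul_eLpNorm_heatSol_sub_le hu0 ht

/-- For integrable initial data with mass `M`, the solution of the heat equation on `ℝⁿ`
satisfies `t^(n/2) ‖u(·,t) - M G_t‖_∞ → 0` as `t → ∞`. -/
theorem heat_sup_convergence_to_gaussian (n : ℕ) (hn : 1 ≤ n)
    (u0 : EuclideanSpace ℝ (Fin n) → ℝ) (hu0 : Integrable u0) (M : ℝ)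
    (hM : ∫ x, u0 x = M) :
    Tendsto (fun t : ℝ =>
        ENNReal.ofReal (t ^ ((n : ℝ) / 2)) *
          eLpNorm (fun x : EuclideanSpace ℝ (Fin n) =>
            heatSol n u0 t x - M * heatKernel n t x) ⊤ volume)
      atTop (nhds 0) :=
  heat_sup_convergence_to_gaussian_general n u0 hu0 M hM
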